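/- With the ALSA-neighbor relation (subsets S, U of size m are neighbors iff |S∩U| = m−1 and the exchanged element of S is its u-argmin or g-argmin, or the exchanged element of U is its u-argmin or g-argmin), the resulting graph on all m-element subsets of {1,...,K} is connected: from any state s₀ there exists a path to any fixed target state s*. -/

import Mathlib

/-- `a` is the minimizer of `f` on the finite set `S`. -/
def IsArgminOn {ι : Type*} (f : ι → ℝ) (S : Finset ι) (a : ι) : Prop :=
  a ∈ S ∧ ∀ b ∈ S, f a ≤ f b

/-- The ALSA neighborhood relation restricted to `m`-element subsets. -/
def AlsaStep {ι : Type*} [DecidableEq ι] (u g : ι → ℝ) (m : ℕ)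
    (S U : Finset ι) : Prop :=
  S.card = m ∧ U.card = m ∧ (S ∩ U).card = m - 1 ∧
  ((∀ x ∈ S \ U, IsArgminOn u S x ∨ IsArgminOn g S x) ∨
   (∀ y ∈ U \ S, IsArgminOn u U y ∨ IsArgminOn g U y))

/-!
Let `T` be a set of `m` indices carrying the largest values of `u`. If `S ≠ T` is another
`m`-set, the `u`-smallest element `x` of `S \ T` minimizes `u` on all of `S`, so exchanging `x`
for an element of `T \ S` is an ALSA move; it shrinks `T \ S`. Hence every `m`-set is joined
to `T`, and the relation is symmetric.
-/

open Finset

namespace Finset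

theorem exists_card_eq_forall_le_of_mem_of_notMem {ι α : Type*} [Fintype ι] [DecidableEq ι]
    [LinearOrder α] (f : ι → α) {n : ℕ} (hn : n ≤ Fintype.card ι) :
    ∃ T : Finset ι, #T = n ∧ ∀ a ∈ T, ∀ b ∉ T, f b ≤ f a := by
  induction n with
  | zero => exact ⟨∅, rfl, by simp⟩
  | succ n ih =>
    obtain ⟨T, hT, hdom⟩ := ih (by omega)
    have hne : Tᶜ.Nonempty := by
      rw [← card_pos, card_compl, hT]
      omega
    obtain ⟨c, hc, hcmax⟩ := Tᶜ.exists_max_image f hne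
    rw [mem_compl] at hc
    refine ⟨insert c T, by rw [card_insert_of_notMem hc, hT], ?_⟩
    intro a ha b hb
    rw [mem_insert, not_or] at hb
    rcases mem_insert.mp ha with rfl | ha
    · exact hcmax b (mem_compl.mpr hb.2)
    · exact hdom a ha b hb.2

end Finset

namespace AlsaStep

variable {ι : Type*} [DecidableEq ι] {u g : ι → ℝ} {m : ℕ}

instance : Std.Symm (AlsaStep u g m) where
  symm _ _ := fun ⟨hS, hU, hSU, hmin⟩ => ⟨hU, hS, by rwa [inter_comm], hmin.symm⟩

theorem erase_insert {S : Finset ι} {x t : ι} (hS : #S = m) (hx : IsArgminOn u S x)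
    (ht : t ∉ S) : AlsaStep u g m S (insert t (S.erase x)) := by
  have hinter : S ∩ insert t (S.erase x) = S.erase x := by
    rw [inter_insert_of_notMem ht, inter_eq_right.mpr (erase_subset x S)]
  have hdiff : S \ insert t (S.erase x) = {x} := by
    rw [sdiff_insert_of_notMem ht, sdiff_erase_self hx.1]
  refine ⟨hS, ?_, ?_, Or.inl ?_⟩
  · rw [card_insert_of_notMem (fun h => ht (mem_of_mem_erase h)), card_erase_of_mem hx.1, hS]
    have : 0 < #S := card_pos.mpr ⟨x, hx.1⟩
    omega
  · rw [hinter, card_erase_of_mem hx.1, hS]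
  · rw [hdiff]
    intro y hy
    rw [mem_singleton.mp hy]
    exact Or.inl hx

end AlsaStep

section TopSet

variable {ι : Type*} [DecidableEq ι] {u : ι → ℝ} {S T : Finset ι}

theorem exists_isArgminOn_mem_sdiff (hT : ∀ a ∈ T, ∀ b ∉ T, u b ≤ u a)
    (hST : (S \ T).Nonempty) : ∃ x ∈ S \ T, IsArgminOn u S x := by
  obtain ⟨x, hx, hxmin⟩ := (S \ T).exists_min_image u hST
  refine ⟨x, hx, (mem_sdiff.mp hx).1, fun b hb => ?_⟩
  by_cases hbT : b ∈ T
  · exact hT b hbT x (mem_sdiff.mp hx).2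
  · exact hxmin b (mem_sdiff.mpr ⟨hb, hbT⟩)

theorem reflTransGen_alsaStep_of_forall_le (g : ι → ℝ) {m : ℕ}
    (hT : ∀ a ∈ T, ∀ b ∉ T, u b ≤ u a) (hTm : #T = m) (hSm : #S = m) :
    Relation.ReflTransGen (AlsaStep u g m) S T := by
  induction hd : #(T \ S) generalizing S with
  | zero =>
    rw [card_eq_zero, sdiff_eq_empty_iff_subset] at hd
    rw [eq_of_subset_of_card_le hd (by omega)]
  | succ n ih =>
    obtain ⟨t, ht⟩ := card_pos.mp (by omega : 0 < #(T \ S))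
    have hST : (S \ T).Nonempty :=
      card_pos.mp (by rw [card_sdiff_comm (hSm.trans hTm.symm)]; omega)
    obtain ⟨x, hx, hxmin⟩ := exists_isArgminOn_mem_sdiff hT hST
    have hstep := AlsaStep.erase_insert (g := g) hSm hxmin (mem_sdiff.mp ht).2
    have hxT : x ∉ T := (mem_sdiff.mp hx).2
    have hshrink : T \ insert t (S.erase x) = (T \ S).erase t := by
      ext a
      grind
    refine .head hstep (ih hstep.2.1 ?_)
    rw [hshrink, card_erase_of_mem ht, hd, Nat.add_sub_cancel]

end TopSet

theorem alsa_graph_connected_general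
    (K m : ℕ)
    (u g : Fin K → ℝ)
    (s₀ sStar : Finset (Fin K)) (h₀ : s₀.card = m) (hStar : sStar.card = m) :
    Relation.ReflTransGen (AlsaStep u g m) s₀ sStar := by
  obtain ⟨T, hTm, hT⟩ := exists_card_eq_forall_le_of_mem_of_notMem u
    (h₀ ▸ card_le_univ s₀ : m ≤ Fintype.card (Fin K))
  exact (reflTransGen_alsaStep_of_forall_le g hT hTm h₀).trans
    (Std.Symm.symm _ _ (reflTransGen_alsaStep_of_forall_le g hT hTm hStar))

theorem alsa_graph_connected
    (K m : ℕ) (hm : 1 ≤ m) (hK : m ≤ K)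
    (u g : Fin K → ℝ) (hu : Function.Injective u) (hg : Function.Injective g)
    (s₀ sStar : Finset (Fin K)) (h₀ : s₀.card = m) (hStar : sStar.card = m) :
    Relation.ReflTransGen (AlsaStep u g m) s₀ sStar :=
  alsa_graph_connected_general K m u g s₀ sStar h₀ hStar
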